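/- arXiv:0710.5552 — 2 statements merged into one kernel-verified Lean document; each statement's English description precedes it below -/
import Mathlib

section
/- Suppose z : [0,T] → ℝ is C² with z(0)=1, z'(0)=X, and z''(τ) ≥ −K·z(τ) − L·∫₀^τ z(s)ds − P for all τ where z > 0, with constants K, L, P ≥ 0 and |X| ≤ χ. Then z(τ) ≥ Y(τ) := 1 − χτ − ½(P+K)τ² − (1/6)(χK+L)τ³ − (χL/24)τ⁴ for all τ in [0,T] where Y remains positive. -/
/-!
Pair the inequality with a weight `φ ≥ 0` on `[0, a]` with `φ(a) = 0`, `φ'(a) = -1`, and let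
`Φ(s) = ∫ₛᵃ φ`. The function `G = φ z' - φ' z - L Φ ∫₀ˢ z - P Φ` has `G(a) = z(a)` and
`G' = φ z'' - φ'' z + L (φ ∫₀ˢ z - Φ z) + P φ ≥ -(K φ + φ'' + L Φ) z`, so `G` is nondecreasing
while `z > 0`, provided `φ` is a subsolution `K φ + φ'' + L Φ ≤ 0` of the adjoint problem. The first
Picard iterate `φ = w - K w³/6 - L w⁴/24`, `w = a - s`, is one, and `G(0) ≤ G(a)` reads
`z(a) ≥ -χ φ(0) - φ'(0) - P Φ(0)`, which dominates the polynomial bound. Positivity of `z`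
propagates along `[0, τ]`: at a first zero of `z` the bound, being positive there, would force `z > 0`.
-/

open Set intervalIntegral

theorem forall_pos_of_forall_pos_Ico {f : ℝ → ℝ} {a b : ℝ} (hf : ContinuousOn f (Icc a b))
    (hstep : ∀ t ∈ Icc a b, (∀ s ∈ Ico a t, 0 < f s) → 0 < f t) :
    ∀ t ∈ Icc a b, 0 < f t := by
  by_contra! hneg
  obtain ⟨t, ⟨ht, hft⟩, hleast⟩ := (isCompact_Icc.of_isClosed_subset
    (hf.preimage_isClosed_of_isClosed isClosed_Icc isClosed_Iic) inter_subset_left).exists_isLeast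
    (by simpa only [Set.Nonempty, mem_inter_iff, mem_preimage, mem_Iic] using hneg)
  refine (hstep t ht fun s hs => ?_).not_ge hft
  by_contra! hfs
  exact (hleast ⟨⟨hs.1, hs.2.le.trans ht.2⟩, hfs⟩).not_gt hs.2

theorem ContinuousOn.continuousOn_primitive {f : ℝ → ℝ} {a b : ℝ} (hf : ContinuousOn f (Icc a b)) :
    ContinuousOn (fun x => ∫ t in a..x, f t) (Icc a b) := by
  rcases le_or_gt a b with hab | hab
  · have hint : MeasureTheory.IntegrableOn f (uIcc a b) := by
      rw [uIcc_of_le hab]; exact hf.integrableOn_Icc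
    simpa only [uIcc_of_le hab] using continuousOn_primitive_interval hint
  · simp only [Icc_eq_empty_of_lt hab, continuousOn_empty]

theorem ContinuousOn.hasDerivAt_primitive {f : ℝ → ℝ} {a b x : ℝ} (hf : ContinuousOn f (Icc a b))
    (hx : x ∈ Ioo a b) : HasDerivAt (fun u => ∫ t in a..u, f t) (f x) x :=
  integral_hasDerivAt_right
    ((hf.mono (Icc_subset_Icc_right hx.2.le)).intervalIntegrable_of_Icc hx.1.le)
    ((hf.mono Ioo_subset_Icc_self).stronglyMeasurableAtFilter isOpen_Ioo x hx)
    (hf.continuousAt (Icc_mem_nhds hx.1 hx.2))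

section WeightedWronskian

variable {K L P a : ℝ} {z z' z'' φ φ' φ'' Φ : ℝ → ℝ}

theorem monotoneOn_weightedWronskian
    (hz : ∀ s ∈ Icc 0 a, HasDerivAt z (z' s) s) (hz' : ∀ s ∈ Icc 0 a, HasDerivAt z' (z'' s) s)
    (hφ : ∀ s ∈ Icc 0 a, HasDerivAt φ (φ' s) s) (hφ' : ∀ s ∈ Icc 0 a, HasDerivAt φ' (φ'' s) s)
    (hΦ : ∀ s ∈ Icc 0 a, HasDerivAt Φ (-φ s) s)
    (hφ_nonneg : ∀ s ∈ Ioo 0 a, 0 ≤ φ s)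
    (hdefect : ∀ s ∈ Ioo 0 a, K * φ s + φ'' s + L * Φ s ≤ 0)
    (hpos : ∀ s ∈ Ioo 0 a, 0 < z s)
    (hineq : ∀ s ∈ Ioo 0 a, -K * z s - L * (∫ u in (0:ℝ)..s, z u) - P ≤ z'' s) :
    MonotoneOn (fun s => φ s * z' s - φ' s * z s - L * Φ s * (∫ u in (0:ℝ)..s, z u) - P * Φ s)
      (Icc 0 a) := by
  have hzc : ContinuousOn z (Icc 0 a) := fun s hs => (hz s hs).continuousAt.continuousWithinAt
  have hcont : ContinuousOn (fun s => φ s * z' s - φ' s * z s - L * Φ s * (∫ u in (0:ℝ)..s, z u)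
      - P * Φ s) (Icc 0 a) := by
    have hc {g g' : ℝ → ℝ} (hg : ∀ s ∈ Icc 0 a, HasDerivAt g (g' s) s) : ContinuousOn g (Icc 0 a) :=
      fun s hs => (hg s hs).continuousAt.continuousWithinAt
    exact ((((hc hφ).mul (hc hz')).sub ((hc hφ').mul hzc)).sub
      ((continuousOn_const.mul (hc hΦ)).mul hzc.continuousOn_primitive)).sub
      (continuousOn_const.mul (hc hΦ))
  refine monotoneOn_of_hasDerivWithinAt_nonneg (convex_Icc 0 a) hcont
    (f' := fun s => φ s * z'' s - φ'' s * z s + L * (φ s * (∫ u in (0:ℝ)..s, z u) - Φ s * z s)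
      + P * φ s) (fun s hs => ?_) (fun s hs => ?_) <;> rw [interior_Icc] at hs
  · have hs' := Ioo_subset_Icc_self hs
    refine (((((hφ s hs').mul (hz' s hs')).sub ((hφ' s hs').mul (hz s hs'))).sub
      (((hΦ s hs').const_mul L).mul (hzc.hasDerivAt_primitive hs))).sub
      ((hΦ s hs').const_mul P)).hasDerivWithinAt.congr_deriv ?_
    ring
  · have hmul := mul_le_mul_of_nonneg_left (hineq s hs) (hφ_nonneg s hs)
    have hdefect_mul := mul_nonpos_of_nonpos_of_nonneg (hdefect s hs) (hpos s hs).le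
    linarith

end WeightedWronskian

section AdjointWeight

variable {K L a s : ℝ}

noncomputable def adjointWeight (K L a s : ℝ) : ℝ :=
  (a - s) - K * (a - s) ^ 3 / 6 - L * (a - s) ^ 4 / 24

noncomputable def adjointWeightTail (K L a s : ℝ) : ℝ :=
  (a - s) ^ 2 / 2 - K * (a - s) ^ 4 / 24 - L * (a - s) ^ 5 / 120

theorem hasDerivAt_adjointWeight :
    HasDerivAt (adjointWeight K L a) (-1 + K * (a - s) ^ 2 / 2 + L * (a - s) ^ 3 / 6) s := by
  have hw := (hasDerivAt_id' s).const_sub a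
  exact ((hw.sub (((hw.pow 3).const_mul K).div_const 6)).sub
    (((hw.pow 4).const_mul L).div_const 24)).congr_deriv (by norm_num; ring)

theorem hasDerivAt_adjointWeight_deriv :
    HasDerivAt (fun s => -1 + K * (a - s) ^ 2 / 2 + L * (a - s) ^ 3 / 6)
      (-(K * (a - s)) - L * (a - s) ^ 2 / 2) s := by
  have hw := (hasDerivAt_id' s).const_sub a
  exact ((((hw.pow 2).const_mul K).div_const 2).const_add (-1)).add
    (((hw.pow 3).const_mul L).div_const 6) |>.congr_deriv (by norm_num; ring)

theorem hasDerivAt_adjointWeightTail :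
    HasDerivAt (adjointWeightTail K L a) (-adjointWeight K L a s) s := by
  have hw := (hasDerivAt_id' s).const_sub a
  exact (((hw.pow 2).div_const 2).sub (((hw.pow 4).const_mul K).div_const 24)).sub
    (((hw.pow 5).const_mul L).div_const 120) |>.congr_deriv (by norm_num [adjointWeight]; ring)

@[simp] theorem adjointWeight_self : adjointWeight K L a a = 0 := by simp [adjointWeight]

@[simp] theorem adjointWeightTail_self : adjointWeightTail K L a a = 0 := by
  simp [adjointWeightTail]

theorem adjointWeight_nonneg (hK : 0 ≤ K) (hL : 0 ≤ L) (hs : s ∈ Icc 0 a)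
    (hsmall : K * a ^ 2 / 6 + L * a ^ 3 / 24 ≤ 1) : 0 ≤ adjointWeight K L a s := by
  have hw : 0 ≤ a - s := sub_nonneg.mpr hs.2
  have hwa : a - s ≤ a := sub_le_self a hs.1
  have h2 := mul_le_mul_of_nonneg_left (pow_le_pow_left₀ hw hwa 2) hK
  have h3 := mul_le_mul_of_nonneg_left (pow_le_pow_left₀ hw hwa 3) hL
  have hfactor : adjointWeight K L a s
      = (a - s) * (1 - (K * (a - s) ^ 2 / 6 + L * (a - s) ^ 3 / 24)) := by
    simp only [adjointWeight]; ring
  rw [hfactor]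
  exact mul_nonneg hw (by linarith)

theorem adjointWeight_defect_nonpos (hK : 0 ≤ K) (hL : 0 ≤ L) (hs : s ≤ a) :
    K * adjointWeight K L a s + (-(K * (a - s)) - L * (a - s) ^ 2 / 2)
      + L * adjointWeightTail K L a s ≤ 0 := by
  have hw : 0 ≤ a - s := sub_nonneg.mpr hs
  have hdefect : K * adjointWeight K L a s + (-(K * (a - s)) - L * (a - s) ^ 2 / 2)
      + L * adjointWeightTail K L a s
      = -(K ^ 2 * (a - s) ^ 3 / 6 + K * L * (a - s) ^ 4 / 12 + L ^ 2 * (a - s) ^ 5 / 120) := by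
    simp only [adjointWeight, adjointWeightTail]; ring
  rw [hdefect, neg_nonpos]
  positivity

end AdjointWeight

section ComparisonBound

variable {χ K L P a : ℝ}

noncomputable def comparisonBound (χ K L P τ : ℝ) : ℝ :=
  1 - χ * τ - (P + K) / 2 * τ ^ 2 - (χ * K + L) / 6 * τ ^ 3 - χ * L / 24 * τ ^ 4

theorem le_one_of_comparisonBound_pos (hχ : 0 ≤ χ) (hK : 0 ≤ K) (hL : 0 ≤ L) (hP : 0 ≤ P)
    (ha : 0 ≤ a) (hbound : 0 < comparisonBound χ K L P a) :
    K * a ^ 2 / 6 + L * a ^ 3 / 24 ≤ 1 := by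
  unfold comparisonBound at hbound
  have : 0 ≤ χ * a + P * a ^ 2 / 2 + K * a ^ 2 / 3 + χ * K * a ^ 3 / 6 + L * a ^ 3 / 8
      + χ * L * a ^ 4 / 24 := by positivity
  linarith

theorem comparisonBound_le_adjointWeight (hχ : 0 ≤ χ) (hK : 0 ≤ K) (hL : 0 ≤ L) (hP : 0 ≤ P)
    (ha : 0 ≤ a) :
    comparisonBound χ K L P a ≤ -χ * adjointWeight K L a 0 - (-1 + K * a ^ 2 / 2 + L * a ^ 3 / 6)
      - P * adjointWeightTail K L a 0 := by
  have hgap : -χ * adjointWeight K L a 0 - (-1 + K * a ^ 2 / 2 + L * a ^ 3 / 6)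
      - P * adjointWeightTail K L a 0 - comparisonBound χ K L P a
      = χ * K * a ^ 3 / 3 + χ * L * a ^ 4 / 12 + P * K * a ^ 4 / 24 + P * L * a ^ 5 / 120 := by
    simp only [adjointWeight, adjointWeightTail, comparisonBound]; ring
  have : 0 ≤ χ * K * a ^ 3 / 3 + χ * L * a ^ 4 / 12 + P * K * a ^ 4 / 24 + P * L * a ^ 5 / 120 := by
    positivity
  linarith

end ComparisonBound

theorem comparisonBound_le {T K L P χ a : ℝ} (hK : 0 ≤ K) (hL : 0 ≤ L) (hP : 0 ≤ P)
    {z z' z'' : ℝ → ℝ}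
    (hz' : ∀ t ∈ Icc (0:ℝ) T, HasDerivAt z (z' t) t)
    (hz'' : ∀ t ∈ Icc (0:ℝ) T, HasDerivAt z' (z'' t) t)
    (hz0 : z 0 = 1) (hz'0 : |z' 0| ≤ χ)
    (hineq : ∀ τ ∈ Icc (0:ℝ) T, 0 < z τ →
      z'' τ ≥ -K * z τ - L * (∫ s in (0:ℝ)..τ, z s) - P)
    (ha : a ∈ Icc 0 T) (hbound : 0 < comparisonBound χ K L P a)
    (hpos : ∀ s ∈ Ico 0 a, 0 < z s) :
    comparisonBound χ K L P a ≤ z a := by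
  have hχ : 0 ≤ χ := (abs_nonneg _).trans hz'0
  have hsub : Icc 0 a ⊆ Icc 0 T := Icc_subset_Icc_right ha.2
  have hsmall := le_one_of_comparisonBound_pos hχ hK hL hP ha.1 hbound
  have hmono := monotoneOn_weightedWronskian
    (fun s hs => hz' s (hsub hs)) (fun s hs => hz'' s (hsub hs))
    (fun _ _ => hasDerivAt_adjointWeight) (fun _ _ => hasDerivAt_adjointWeight_deriv)
    (fun _ _ => hasDerivAt_adjointWeightTail)
    (fun s hs => adjointWeight_nonneg hK hL (Ioo_subset_Icc_self hs) hsmall)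
    (fun s hs => adjointWeight_defect_nonpos hK hL hs.2.le)
    (fun s hs => hpos s (Ioo_subset_Ico_self hs))
    (fun s hs => hineq s (hsub (Ioo_subset_Icc_self hs)) (hpos s (Ioo_subset_Ico_self hs)))
    (left_mem_Icc.mpr ha.1) (right_mem_Icc.mpr ha.1) ha.1
  norm_num [hz0] at hmono
  have hz'0_mul := mul_le_mul_of_nonneg_left (neg_le_of_abs_le hz'0)
    (adjointWeight_nonneg hK hL (left_mem_Icc.mpr ha.1) hsmall)
  linarith [comparisonBound_le_adjointWeight hχ hK hL hP ha.1]

theorem stmt1_general (T K L P χ : ℝ) (hK : 0 ≤ K) (hL : 0 ≤ L) (hP : 0 ≤ P)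
    (z z' z'' : ℝ → ℝ)
    (hz' : ∀ t ∈ Icc (0:ℝ) T, HasDerivAt z (z' t) t)
    (hz'' : ∀ t ∈ Icc (0:ℝ) T, HasDerivAt z' (z'' t) t)
    (hz0 : z 0 = 1) (hz'0 : |z' 0| ≤ χ)
    (hineq : ∀ τ ∈ Icc (0:ℝ) T, 0 < z τ →
      z'' τ ≥ -K * z τ - L * (∫ s in (0:ℝ)..τ, z s) - P) :
    ∀ τ ∈ Icc (0:ℝ) T,
      (∀ s ∈ Icc (0:ℝ) τ,
        0 < 1 - χ*s - (P+K)/2*s^2 - (χ*K+L)/6*s^3 - χ*L/24*s^4) →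
      z τ ≥ 1 - χ*τ - (P+K)/2*τ^2 - (χ*K+L)/6*τ^3 - χ*L/24*τ^4 := by
  intro τ hτ hbound
  change ∀ s ∈ Icc 0 τ, 0 < comparisonBound χ K L P s at hbound
  have hsub : Icc 0 τ ⊆ Icc 0 T := Icc_subset_Icc_right hτ.2
  have hbound_le (t : ℝ) (ht : t ∈ Icc 0 τ) (hpos : ∀ s ∈ Ico 0 t, 0 < z s) :
      comparisonBound χ K L P t ≤ z t :=
    comparisonBound_le hK hL hP hz' hz'' hz0 hz'0 hineq (hsub ht) (hbound t ht) hpos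
  have hpos : ∀ t ∈ Icc 0 τ, 0 < z t :=
    forall_pos_of_forall_pos_Ico (fun t ht => (hz' t (hsub ht)).continuousAt.continuousWithinAt)
      fun t ht hpos => (hbound t ht).trans_le (hbound_le t ht hpos)
  exact hbound_le τ (right_mem_Icc.mpr hτ.1) fun s hs => hpos s (Ico_subset_Icc_self hs)

theorem stmt1 (T K L P χ : ℝ) (hK : 0 ≤ K) (hL : 0 ≤ L) (hP : 0 ≤ P) (hχ : 0 ≤ χ)
    (z z' z'' : ℝ → ℝ)
    (hz' : ∀ t ∈ Icc (0:ℝ) T, HasDerivAt z (z' t) t)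
    (hz'' : ∀ t ∈ Icc (0:ℝ) T, HasDerivAt z' (z'' t) t)
    (hcont : ContinuousOn z'' (Icc 0 T))
    (hz0 : z 0 = 1) (hz'0 : |z' 0| ≤ χ)
    (hineq : ∀ τ ∈ Icc (0:ℝ) T, 0 < z τ →
      z'' τ ≥ -K * z τ - L * (∫ s in (0:ℝ)..τ, z s) - P) :
    ∀ τ ∈ Icc (0:ℝ) T,
      (∀ s ∈ Icc (0:ℝ) τ,
        0 < 1 - χ*s - (P+K)/2*s^2 - (χ*K+L)/6*s^3 - χ*L/24*s^4) →
      z τ ≥ 1 - χ*τ - (P+K)/2*τ^2 - (χ*K+L)/6*τ^3 - χ*L/24*τ^4 :=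
  stmt1_general T K L P χ hK hL hP z z' z'' hz' hz'' hz0 hz'0 hineq
end

section
/- Let z, y : [0,T] → ℝ be continuous with z, y and given data satisfying: z(τ) ≥ P(τ) − ∫₀^τ∫₀^σ [a(σ')z(σ') + ∫₀^{σ'}(b(σ'')z(σ'') + g(σ''))dσ''] dσ' dσ in absolute value form as in (yJacobi), and y(τ) = P_y(τ) + the same double-triple integral with z replaced by y, where a, b ≥ 0 are continuous, P_y(τ) − P(τ) ≥ ε for some ε > 0 pointwise on [0,T] (from the initial data choice). Then z(τ) ≤ y(τ) for all τ ∈ [0,T]. -/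
open Set intervalIntegral

/-!
Write `V u τ` for the nested integral term and put `w = y - z`. The upper half of the inequality
for `z` and the equation for `y` give `w τ ≥ ε + (V y τ - V z τ)`. Since `a, b ≥ 0`, `V u τ` is
monotone in `u|[0, τ]`, so `w τ > 0` as soon as `w > 0` on `[0, τ)`; hence `w` has no first zero.
-/

theorem ContinuousOn.forall_lt_of_forall_Ico_lt {α β : Type*}
    [ConditionallyCompleteLinearOrder α] [TopologicalSpace α] [OrderTopology α]
    [LinearOrder β] [TopologicalSpace β] [OrderClosedTopology β]
    {w : α → β} {a b : α} {c : β} (hw : ContinuousOn w (Icc a b))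
    (hstep : ∀ t ∈ Icc a b, (∀ s ∈ Ico a t, c < w s) → c < w t) :
    ∀ t ∈ Icc a b, c < w t := by
  by_contra! ⟨t, ht, hwt⟩
  set S := Icc a b ∩ w ⁻¹' Iic c
  have hS : IsClosed S := hw.preimage_isClosed_of_isClosed isClosed_Icc isClosed_Iic
  have hbdd : BddBelow S := ⟨a, fun _ hs => hs.1.1⟩
  have hmem : sInf S ∈ S := hS.csInf_mem ⟨t, ht, hwt⟩ hbdd
  refine (hstep _ hmem.1 fun s hs => ?_).not_ge hmem.2
  by_contra! hws
  exact hs.2.not_ge (csInf_le hbdd ⟨⟨hs.1, hs.2.le.trans hmem.1.2⟩, hws⟩)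

section Primitive

variable {c t : ℝ} {f g : ℝ → ℝ}

theorem ContinuousOn.continuousOn_primitive_Icc (hf : ContinuousOn f (Icc c t)) :
    ContinuousOn (fun s => ∫ x in c..s, f x) (Icc c t) := by
  rcases le_or_gt c t with hct | htc
  · rw [← uIcc_of_le hct] at hf ⊢
    exact continuousOn_primitive_interval hf.integrableOn_Icc
  · simp only [Icc_eq_empty_of_lt htc, continuousOn_empty]

theorem primitive_le_primitive_of_le_on_Ioo (hf : ContinuousOn f (Icc c t))
    (hg : ContinuousOn g (Icc c t)) (hfg : ∀ s ∈ Ioo c t, f s ≤ g s) :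
    ∀ s ∈ Icc c t, ∫ x in c..s, f x ≤ ∫ x in c..s, g x := by
  intro s hs
  have hsub : Icc c s ⊆ Icc c t := Icc_subset_Icc_right hs.2
  exact integral_mono_on_of_le_Ioo hs.1 ((hf.mono hsub).intervalIntegrable_of_Icc hs.1)
    ((hg.mono hsub).intervalIntegrable_of_Icc hs.1)
    fun x hx => hfg x ⟨hx.1, hx.2.trans_le hs.2⟩

end Primitive

noncomputable def nestedIntegral (a b g u : ℝ → ℝ) (τ : ℝ) : ℝ :=
  ∫ σ in (0:ℝ)..τ, ∫ σ' in (0:ℝ)..σ, (a σ' * u σ' + ∫ σ'' in (0:ℝ)..σ', (b σ'' * u σ'' + g σ''))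

theorem nestedIntegral_mono {t : ℝ} {a b g u v : ℝ → ℝ} (ha : ContinuousOn a (Icc 0 t))
    (hb : ContinuousOn b (Icc 0 t)) (hg : ContinuousOn g (Icc 0 t))
    (ha₀ : ∀ s ∈ Ioo 0 t, 0 ≤ a s) (hb₀ : ∀ s ∈ Ioo 0 t, 0 ≤ b s)
    (hu : ContinuousOn u (Icc 0 t)) (hv : ContinuousOn v (Icc 0 t))
    (huv : ∀ s ∈ Ioo 0 t, u s ≤ v s) :
    ∀ s ∈ Icc 0 t, nestedIntegral a b g u s ≤ nestedIntegral a b g v s := by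
  have hinner {w : ℝ → ℝ} (hw : ContinuousOn w (Icc 0 t)) : ContinuousOn
      (fun σ' => a σ' * w σ' + ∫ σ'' in (0:ℝ)..σ', (b σ'' * w σ'' + g σ'')) (Icc 0 t) :=
    (ha.mul hw).add ((hb.mul hw).add hg).continuousOn_primitive_Icc
  refine primitive_le_primitive_of_le_on_Ioo (hinner hu).continuousOn_primitive_Icc
    (hinner hv).continuousOn_primitive_Icc fun σ hσ => ?_
  refine primitive_le_primitive_of_le_on_Ioo (hinner hu) (hinner hv) (fun σ' hσ' => ?_) σ
    (Ioo_subset_Icc_self hσ)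
  have hle := primitive_le_primitive_of_le_on_Ioo ((hb.mul hu).add hg) ((hb.mul hv).add hg)
    (fun s hs => add_le_add_left (mul_le_mul_of_nonneg_left (huv s hs) (hb₀ s hs)) _) σ'
    (Ioo_subset_Icc_self hσ')
  exact add_le_add (mul_le_mul_of_nonneg_left (huv σ' hσ') (ha₀ σ' hσ')) hle

theorem stmt9_general (T ε : ℝ) (hε : 0 < ε)
    (z y a b g : ℝ → ℝ)
    (hz : ContinuousOn z (Icc 0 T)) (hy : ContinuousOn y (Icc 0 T))
    (ha : ContinuousOn a (Icc 0 T)) (hb : ContinuousOn b (Icc 0 T))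
    (hgc : ContinuousOn g (Icc 0 T))
    (hanneg : ∀ t ∈ Icc (0:ℝ) T, 0 ≤ a t) (hbnneg : ∀ t ∈ Icc (0:ℝ) T, 0 ≤ b t)
    (p0 p1 p2 r0 r1 r2 : ℝ)
    (hsep : ∀ τ ∈ Icc (0:ℝ) T,
      (p0 + p1*τ + p2*τ^2) + ε ≤ r0 + r1*τ + r2*τ^2)
    (hzineq : ∀ τ ∈ Icc (0:ℝ) T,
      |z τ - (p0 + p1*τ + p2*τ^2)| ≤
        ∫ σ in (0:ℝ)..τ, ∫ σ' in (0:ℝ)..σ,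
          (a σ' * z σ' + ∫ σ'' in (0:ℝ)..σ', (b σ'' * z σ'' + g σ'')))
    (hyeq : ∀ τ ∈ Icc (0:ℝ) T,
      y τ = (r0 + r1*τ + r2*τ^2) +
        ∫ σ in (0:ℝ)..τ, ∫ σ' in (0:ℝ)..σ,
          (a σ' * y σ' + ∫ σ'' in (0:ℝ)..σ', (b σ'' * y σ'' + g σ''))) :
    ∀ τ ∈ Icc (0:ℝ) T, z τ ≤ y τ := by
  suffices hpos : ∀ t ∈ Icc (0:ℝ) T, 0 < y t - z t from
    fun τ hτ => sub_nonneg.mp (hpos τ hτ).le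
  refine (hy.sub hz).forall_lt_of_forall_Ico_lt fun t ht hbefore => ?_
  have hsub : Icc 0 t ⊆ Icc 0 T := Icc_subset_Icc_right ht.2
  have hIoo : Ioo 0 t ⊆ Icc 0 T := Ioo_subset_Icc_self.trans hsub
  have hmono : nestedIntegral a b g z t ≤ nestedIntegral a b g y t :=
    nestedIntegral_mono (ha.mono hsub) (hb.mono hsub) (hgc.mono hsub)
      (fun s hs => hanneg s (hIoo hs)) (fun s hs => hbnneg s (hIoo hs)) (hz.mono hsub)
      (hy.mono hsub) (fun s hs => (sub_pos.mp (hbefore s (Ioo_subset_Ico_self hs))).le)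
      t ⟨ht.1, le_rfl⟩
  have hz_le : z t ≤ (p0 + p1*t + p2*t^2) + nestedIntegral a b g z t :=
    sub_le_iff_le_add'.mp (abs_le.mp (hzineq t ht)).2
  have hy_eq : y t = (r0 + r1*t + r2*t^2) + nestedIntegral a b g y t := hyeq t ht
  show 0 < y t - z t
  linarith [hsep t ht]

theorem stmt9 (T ε : ℝ) (hT : 0 ≤ T) (hε : 0 < ε)
    (z y a b g : ℝ → ℝ)
    (hz : ContinuousOn z (Icc 0 T)) (hy : ContinuousOn y (Icc 0 T))
    (ha : ContinuousOn a (Icc 0 T)) (hb : ContinuousOn b (Icc 0 T))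
    (hgc : ContinuousOn g (Icc 0 T))
    (hanneg : ∀ t ∈ Icc (0:ℝ) T, 0 ≤ a t) (hbnneg : ∀ t ∈ Icc (0:ℝ) T, 0 ≤ b t)
    (hgnneg : ∀ t ∈ Icc (0:ℝ) T, 0 ≤ g t)
    (p0 p1 p2 r0 r1 r2 : ℝ)
    (hsep : ∀ τ ∈ Icc (0:ℝ) T,
      (p0 + p1*τ + p2*τ^2) + ε ≤ r0 + r1*τ + r2*τ^2)
    (hzineq : ∀ τ ∈ Icc (0:ℝ) T,
      |z τ - (p0 + p1*τ + p2*τ^2)| ≤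
        ∫ σ in (0:ℝ)..τ, ∫ σ' in (0:ℝ)..σ,
          (a σ' * z σ' + ∫ σ'' in (0:ℝ)..σ', (b σ'' * z σ'' + g σ'')))
    (hyeq : ∀ τ ∈ Icc (0:ℝ) T,
      y τ = (r0 + r1*τ + r2*τ^2) +
        ∫ σ in (0:ℝ)..τ, ∫ σ' in (0:ℝ)..σ,
          (a σ' * y σ' + ∫ σ'' in (0:ℝ)..σ', (b σ'' * y σ'' + g σ''))) :
    ∀ τ ∈ Icc (0:ℝ) T, z τ ≤ y τ :=
  stmt9_general T ε hε z y a b g hz hy ha hb hgc hanneg hbnneg p0 p1 p2 r0 r1 r2 hsep hzineq hyeq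
end
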